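/- arXiv:2006.05450 — 4 statements merged into one kernel-verified Lean document; each statement's English description precedes it below -/
import Mathlib

section
/- Let ζ > 0 and let α : ℝ → ℝ satisfy the wheeled inverted pendulum equation on the horizontal, (ζ sin²(α) + 2) α'' = (ζ + 2) sin(α) − (ζ/2) (α')² sin(2α). Then the quantity E₀(τ) = (α')² + (ζ+2) cos(α) + (ζ/2)(α')² sin²(α) is constant in τ. -/
/-!
Along any motion `t ↦ (a t, v t)` the derivative of `E₀(a, v)` is
`(ζ sin² a + 2) v v' - ((ζ + 2) sin a - (ζ/2) v² sin 2a) a'`. For `a = α`, `v = α'` this is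
`α'` times the difference of the two sides of the equation of motion, hence zero, and a function
with vanishing derivative is constant.
-/

open Real

noncomputable def horizontalEnergy (ζ a v : ℝ) : ℝ :=
  v ^ 2 + (ζ + 2) * cos a + ζ / 2 * v ^ 2 * sin a ^ 2

theorem hasDerivAt_horizontalEnergy (ζ : ℝ) {a v : ℝ → ℝ} {a' v' τ : ℝ}
    (ha : HasDerivAt a a' τ) (hv : HasDerivAt v v' τ) :
    HasDerivAt (fun t => horizontalEnergy ζ (a t) (v t))
      ((ζ * sin (a τ) ^ 2 + 2) * v τ * v'
        - ((ζ + 2) * sin (a τ) - ζ / 2 * v τ ^ 2 * sin (2 * a τ)) * a') τ := by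
  refine (((hv.pow 2).add (ha.cos.const_mul (ζ + 2))).add
    (((hv.pow 2).const_mul (ζ / 2)).mul (ha.sin.pow 2))).congr_deriv ?_
  simp only [Pi.pow_apply, sin_two_mul]
  push_cast
  ring

theorem hasDerivAt_horizontalEnergy_deriv_eq_zero {ζ : ℝ} {α : ℝ → ℝ} {τ : ℝ}
    (hα : DifferentiableAt ℝ α τ) (hα' : DifferentiableAt ℝ (deriv α) τ)
    (heq : (ζ * sin (α τ) ^ 2 + 2) * deriv (deriv α) τ =
      (ζ + 2) * sin (α τ) - ζ / 2 * deriv α τ ^ 2 * sin (2 * α τ)) :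
    HasDerivAt (fun t => horizontalEnergy ζ (α t) (deriv α t)) 0 τ := by
  convert hasDerivAt_horizontalEnergy ζ hα.hasDerivAt hα'.hasDerivAt using 1
  linear_combination -deriv α τ * heq

theorem wip_horizontal_energy_conserved_general (ζ : ℝ) (α : ℝ → ℝ)
    (hα : ContDiff ℝ 2 α)
    (heq : ∀ τ : ℝ,
      (ζ * Real.sin (α τ) ^ 2 + 2) * deriv (deriv α) τ =
        (ζ + 2) * Real.sin (α τ)
          - ζ / 2 * (deriv α τ) ^ 2 * Real.sin (2 * α τ)) :
    ∀ τ₁ τ₂ : ℝ,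
      (deriv α τ₁) ^ 2 + (ζ + 2) * Real.cos (α τ₁)
          + ζ / 2 * (deriv α τ₁) ^ 2 * Real.sin (α τ₁) ^ 2 =
      (deriv α τ₂) ^ 2 + (ζ + 2) * Real.cos (α τ₂)
          + ζ / 2 * (deriv α τ₂) ^ 2 * Real.sin (α τ₂) ^ 2 := by
  have hE (τ : ℝ) : HasDerivAt (fun t => horizontalEnergy ζ (α t) (deriv α t)) 0 τ :=
    hasDerivAt_horizontalEnergy_deriv_eq_zero (hα.differentiable two_ne_zero τ)
      (hα.differentiable_deriv_two τ) (heq τ)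
  exact is_const_of_deriv_eq_zero (fun τ => (hE τ).differentiableAt) (fun τ => (hE τ).deriv)

/-- Conservation law for the WIP on the horizontal. -/
theorem wip_horizontal_energy_conserved (ζ : ℝ) (hζ : 0 < ζ) (α : ℝ → ℝ)
    (hα : ContDiff ℝ 2 α)
    (heq : ∀ τ : ℝ,
      (ζ * Real.sin (α τ) ^ 2 + 2) * deriv (deriv α) τ =
        (ζ + 2) * Real.sin (α τ)
          - ζ / 2 * (deriv α τ) ^ 2 * Real.sin (2 * α τ)) :
    ∀ τ₁ τ₂ : ℝ,
      (deriv α τ₁) ^ 2 + (ζ + 2) * Real.cos (α τ₁)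
          + ζ / 2 * (deriv α τ₁) ^ 2 * Real.sin (α τ₁) ^ 2 =
      (deriv α τ₂) ^ 2 + (ζ + 2) * Real.cos (α τ₂)
          + ζ / 2 * (deriv α τ₂) ^ 2 * Real.sin (α τ₂) ^ 2 :=
  wip_horizontal_energy_conserved_general ζ α hα heq
end

section
/- Let ζ > 0, ε : ℝ, and let α : ℝ → ℝ satisfy the wheeled inverted pendulum equation on the inclined line, (ζ sin²(ε−α) + 2) α'' = (2+ζ) sin(α) + sin(ε) cos(ε−α) + (ζ/2) (α')² sin(2(ε−α)). Then E_ε(τ) = (α')² + (ζ+2) cos(α) + sin(ε) sin(ε−α) + (ζ/2)(α')² sin²(ε−α) is constant in τ. -/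
open Real

/-!
Along any motion, the time derivative of `E_ε` equals `α'` times the difference of the two
sides of the equation of motion, so it vanishes on solutions and `E_ε` is constant.
-/

/-- The energy `E_ε` as a function of the angle `a` and the angular velocity `v`. -/
noncomputable def inclinedEnergy (ζ ε a v : ℝ) : ℝ :=
  v ^ 2 + (ζ + 2) * cos a + sin ε * sin (ε - a) + ζ / 2 * v ^ 2 * sin (ε - a) ^ 2

theorem hasDerivAt_inclinedEnergy (ζ ε : ℝ) {a w : ℝ → ℝ} {w' t : ℝ}
    (ha : HasDerivAt a (w t) t) (hw : HasDerivAt w w' t) :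
    HasDerivAt (fun s => inclinedEnergy ζ ε (a s) (w s))
      (w t * ((ζ * sin (ε - a t) ^ 2 + 2) * w'
        - ((2 + ζ) * sin (a t) + sin ε * cos (ε - a t)
          + ζ / 2 * w t ^ 2 * sin (2 * (ε - a t))))) t := by
  have hsin : HasDerivAt (fun s => sin (ε - a s)) (cos (ε - a t) * -w t) t :=
    (ha.const_sub ε).sin
  have h : HasDerivAt (fun s => inclinedEnergy ζ ε (a s) (w s)) _ t :=
    (((hw.fun_pow 2).add (ha.cos.const_mul (ζ + 2))).add (hsin.const_mul (sin ε))).add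
      (((hw.fun_pow 2).const_mul (ζ / 2)).mul (hsin.fun_pow 2))
  convert h using 1
  rw [sin_two_mul]
  ring

theorem wip_inclined_energy_conserved_general (ζ ε : ℝ) (α : ℝ → ℝ)
    (hα : ContDiff ℝ 2 α)
    (heq : ∀ τ : ℝ,
      (ζ * Real.sin (ε - α τ) ^ 2 + 2) * deriv (deriv α) τ =
        (2 + ζ) * Real.sin (α τ) + Real.sin ε * Real.cos (ε - α τ)
          + ζ / 2 * (deriv α τ) ^ 2 * Real.sin (2 * (ε - α τ))) :
    ∀ τ₁ τ₂ : ℝ,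
      (deriv α τ₁) ^ 2 + (ζ + 2) * Real.cos (α τ₁)
          + Real.sin ε * Real.sin (ε - α τ₁)
          + ζ / 2 * (deriv α τ₁) ^ 2 * Real.sin (ε - α τ₁) ^ 2 =
      (deriv α τ₂) ^ 2 + (ζ + 2) * Real.cos (α τ₂)
          + Real.sin ε * Real.sin (ε - α τ₂)
          + ζ / 2 * (deriv α τ₂) ^ 2 * Real.sin (ε - α τ₂) ^ 2 := by
  have hE : ∀ τ, HasDerivAt (fun s => inclinedEnergy ζ ε (α s) (deriv α s)) 0 τ := fun τ => by
    have h := hasDerivAt_inclinedEnergy ζ ε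
      ((hα.differentiable two_ne_zero τ).hasDerivAt)
      ((hα.differentiable_deriv_two τ).hasDerivAt)
    rwa [heq τ, sub_self, mul_zero] at h
  intro τ₁ τ₂
  exact is_const_of_deriv_eq_zero (fun τ => (hE τ).differentiableAt) (fun τ => (hE τ).deriv) τ₁ τ₂

/-- Conservation law for the WIP on the inclined line. -/
theorem wip_inclined_energy_conserved (ζ ε : ℝ) (hζ : 0 < ζ) (α : ℝ → ℝ)
    (hα : ContDiff ℝ 2 α)
    (heq : ∀ τ : ℝ,
      (ζ * Real.sin (ε - α τ) ^ 2 + 2) * deriv (deriv α) τ =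
        (2 + ζ) * Real.sin (α τ) + Real.sin ε * Real.cos (ε - α τ)
          + ζ / 2 * (deriv α τ) ^ 2 * Real.sin (2 * (ε - α τ))) :
    ∀ τ₁ τ₂ : ℝ,
      (deriv α τ₁) ^ 2 + (ζ + 2) * Real.cos (α τ₁)
          + Real.sin ε * Real.sin (ε - α τ₁)
          + ζ / 2 * (deriv α τ₁) ^ 2 * Real.sin (ε - α τ₁) ^ 2 =
      (deriv α τ₂) ^ 2 + (ζ + 2) * Real.cos (α τ₂)
          + Real.sin ε * Real.sin (ε - α τ₂)
          + ζ / 2 * (deriv α τ₂) ^ 2 * Real.sin (ε - α τ₂) ^ 2 :=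
  wip_inclined_energy_conserved_general ζ ε α hα heq
end

section
/- Let ζ, ρ, k₁, k₂ > 0 and let α : ℝ → ℝ satisfy the controlled WIP equation on the horizontal with PD control h = k₁α + k₂α': (ζ sin²(α)+2) α'' = (ζ+2) sin(α) − (ζ/2)(α')² sin(2α) − 2(cos(α)/ρ + (1+2/ζ)ρ)(k₁α + k₂α'). Then the Lyapunov function 𝓔₀(τ) = (1 + (ζ/2) sin²(α)) (α')² + (ζ+2) cos(α) + k₁( (2/ρ)(α sin(α) + cos(α)) + α² ρ (1+2/ζ) ) satisfies d𝓔₀/dτ = −2 k₂ (α')² ( (1+2/ζ)ρ + cos(α)/ρ ). -/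
/-!
Along any trajectory, the derivative of `𝓔₀` is `α'` times the combination
`(ζ sin² α + 2) α'' + (ζ/2) α'² sin 2α − (ζ + 2) sin α + 2 k₁ α (cos α / ρ + (1 + 2/ζ) ρ)`.
The equation of motion makes this combination equal to `−2 k₂ α' (cos α / ρ + (1 + 2/ζ) ρ)`,
because the proportional part of the control cancels the derivative of the `k₁`-term of `𝓔₀`.
-/

open Real

/-- `𝓔₀` as a function of the state `(x, v) = (α, α')`. -/
noncomputable def wipHorizontalEnergy (ζ ρ k₁ x v : ℝ) : ℝ :=
  (1 + ζ / 2 * sin x ^ 2) * v ^ 2 + (ζ + 2) * cos x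
    + k₁ * (2 / ρ * (x * sin x + cos x) + x ^ 2 * ρ * (1 + 2 / ζ))

theorem hasDerivAt_wipHorizontalEnergy (ζ ρ k₁ : ℝ) {x v : ℝ → ℝ} {a τ : ℝ}
    (hx : HasDerivAt x (v τ) τ) (hv : HasDerivAt v a τ) :
    HasDerivAt (fun t => wipHorizontalEnergy ζ ρ k₁ (x t) (v t))
      (v τ * ((ζ * sin (x τ) ^ 2 + 2) * a + ζ / 2 * v τ ^ 2 * sin (2 * x τ)
        - (ζ + 2) * sin (x τ) + 2 * k₁ * x τ * (cos (x τ) / ρ + (1 + 2 / ζ) * ρ))) τ := by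
  have hsin := (hasDerivAt_sin (x τ)).comp τ hx
  have hcos := (hasDerivAt_cos (x τ)).comp τ hx
  have hkinetic := (((hsin.pow 2).const_mul (ζ / 2)).const_add 1).mul (hv.pow 2)
  have hcontrol := ((((hx.mul hsin).add hcos).const_mul (2 / ρ)).add
    (((hx.pow 2).mul_const ρ).mul_const (1 + 2 / ζ))).const_mul k₁
  have H := (hkinetic.add (hcos.const_mul (ζ + 2))).add hcontrol
  refine H.congr_deriv ?_
  simp only [Function.comp_apply, Pi.pow_apply, sin_two_mul]
  push_cast
  ring

theorem wip_horizontal_lyapunov_deriv_general (ζ ρ k₁ k₂ : ℝ)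
    (α : ℝ → ℝ) (hα : ContDiff ℝ 2 α)
    (heq : ∀ τ : ℝ,
      (ζ * Real.sin (α τ) ^ 2 + 2) * deriv (deriv α) τ =
        (ζ + 2) * Real.sin (α τ)
          - ζ / 2 * (deriv α τ) ^ 2 * Real.sin (2 * α τ)
          - 2 * (Real.cos (α τ) / ρ + (1 + 2 / ζ) * ρ)
              * (k₁ * α τ + k₂ * deriv α τ)) :
    ∀ τ : ℝ,
      deriv (fun t =>
        (1 + ζ / 2 * Real.sin (α t) ^ 2) * (deriv α t) ^ 2
          + (ζ + 2) * Real.cos (α t)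
          + k₁ * (2 / ρ * (α t * Real.sin (α t) + Real.cos (α t))
              + (α t) ^ 2 * ρ * (1 + 2 / ζ))) τ =
      -2 * k₂ * (deriv α τ) ^ 2
        * ((1 + 2 / ζ) * ρ + Real.cos (α τ) / ρ) := by
  intro τ
  have hα' : HasDerivAt α (deriv α τ) τ := (hα.differentiable (by norm_num) τ).hasDerivAt
  have hα'' := (hα.differentiable_deriv_two τ).hasDerivAt
  change deriv (fun t => wipHorizontalEnergy ζ ρ k₁ (α t) (deriv α t)) τ = _
  rw [(hasDerivAt_wipHorizontalEnergy ζ ρ k₁ hα' hα'').deriv]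
  linear_combination deriv α τ * heq τ

/-- Derivative of the Lyapunov function for the PD-controlled WIP on the
horizontal. -/
theorem wip_horizontal_lyapunov_deriv (ζ ρ k₁ k₂ : ℝ)
    (hζ : 0 < ζ) (hρ : 0 < ρ) (hk₁ : 0 < k₁) (hk₂ : 0 < k₂)
    (α : ℝ → ℝ) (hα : ContDiff ℝ 2 α)
    (heq : ∀ τ : ℝ,
      (ζ * Real.sin (α τ) ^ 2 + 2) * deriv (deriv α) τ =
        (ζ + 2) * Real.sin (α τ)
          - ζ / 2 * (deriv α τ) ^ 2 * Real.sin (2 * α τ)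
          - 2 * (Real.cos (α τ) / ρ + (1 + 2 / ζ) * ρ)
              * (k₁ * α τ + k₂ * deriv α τ)) :
    ∀ τ : ℝ,
      deriv (fun t =>
        (1 + ζ / 2 * Real.sin (α t) ^ 2) * (deriv α t) ^ 2
          + (ζ + 2) * Real.cos (α t)
          + k₁ * (2 / ρ * (α t * Real.sin (α t) + Real.cos (α t))
              + (α t) ^ 2 * ρ * (1 + 2 / ζ))) τ =
      -2 * k₂ * (deriv α τ) ^ 2
        * ((1 + 2 / ζ) * ρ + Real.cos (α τ) / ρ) :=
  wip_horizontal_lyapunov_deriv_general ζ ρ k₁ k₂ α hα heq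
end

section
/- Let ζ, ρ > 0 with 2k₁ρ²(ζ+2) + 2k₁ζ − ζρ(ζ+2) > 0 (i.e. condition (13) holds). Then α = 0 is a strict local minimum of the function V(α) = (ζ+2) cos(α) + k₁((2/ρ)(α sin α + cos α) + α² ρ (1+2/ζ)). -/
open Real Set Filter Topology

/-!
`V'(0) = 0`, and `ρζ · V''(0)` is exactly the left-hand side of condition (13), so `V''(0) > 0`.
Strictness comes from the second-derivative test in its strict form: near `0`, `V'` has the
sign of `α`, so `V` strictly decreases to the left of `0` and strictly increases to its right.
-/

theorem eventually_nhdsNE_lt_of_deriv_deriv_pos {f : ℝ → ℝ} {x₀ : ℝ}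
    (hf : 0 < deriv (deriv f) x₀) (hd : deriv f x₀ = 0) (hc : ContinuousAt f x₀) :
    ∀ᶠ x in 𝓝[≠] x₀, f x₀ < f x := by
  have hsign := eventually_nhdsWithin_of_eventually_nhds (s := {x₀}ᶜ)
    (eventually_nhdsWithin_sign_eq_of_deriv_pos hf hd)
  rw [← nhdsLT_sup_nhdsGT, eventually_sup]
  constructor
  · obtain ⟨a, ha, hneg⟩ :=
      (nhdsLT_basis x₀).eventually_iff.mp (deriv_neg_left_of_sign_deriv hsign)
    have hdiff : DifferentiableOn ℝ f (Ioo a x₀) := fun x hx =>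
      (differentiableAt_of_deriv_ne_zero (hneg hx).ne).differentiableWithinAt
    have hanti : StrictAntiOn f (Ioc a x₀) :=
      strictAntiOn_of_deriv_neg (convex_Ioc a x₀)
        (Ioo_union_right ha ▸ hdiff.continuousOn.union_continuousAt isOpen_Ioo (by simpa))
        (by simpa using fun x hx => hneg hx)
    filter_upwards [Ioo_mem_nhdsLT ha] with x hx
    exact hanti ⟨hx.1, hx.2.le⟩ ⟨ha, le_rfl⟩ hx.2
  · obtain ⟨c, hc', hpos⟩ :=
      (nhdsGT_basis x₀).eventually_iff.mp (deriv_pos_right_of_sign_deriv hsign)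
    have hdiff : DifferentiableOn ℝ f (Ioo x₀ c) := fun x hx =>
      (differentiableAt_of_deriv_ne_zero (hpos hx).ne').differentiableWithinAt
    have hmono : StrictMonoOn f (Ico x₀ c) :=
      strictMonoOn_of_deriv_pos (convex_Ico x₀ c)
        (Ioo_union_left hc' ▸ hdiff.continuousOn.union_continuousAt isOpen_Ioo (by simpa))
        (by simpa using fun x hx => hpos hx)
    filter_upwards [Ioo_mem_nhdsGT hc'] with x hx
    exact hmono ⟨le_rfl, hc'⟩ ⟨hx.1.le, hx.2⟩ hx.1

noncomputable def horizontalPotential (ζ ρ k₁ α : ℝ) : ℝ :=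
  (ζ + 2) * cos α + k₁ * (2 / ρ * (α * sin α + cos α) + α ^ 2 * ρ * (1 + 2 / ζ))

section
variable (ζ ρ k₁ : ℝ)

theorem hasDerivAt_horizontalPotential (x : ℝ) :
    HasDerivAt (horizontalPotential ζ ρ k₁)
      (-(ζ + 2) * sin x + k₁ * (2 / ρ * (x * cos x) + 2 * ρ * (1 + 2 / ζ) * x)) x := by
  refine (((hasDerivAt_cos x).const_mul (ζ + 2)).add
    (((((hasDerivAt_id' x).mul (hasDerivAt_sin x)).add (hasDerivAt_cos x)).const_mul (2 / ρ)).add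
      (((hasDerivAt_pow 2 x).mul_const ρ).mul_const (1 + 2 / ζ)) |>.const_mul k₁)).congr_deriv ?_
  push_cast
  ring

theorem deriv_horizontalPotential :
    deriv (horizontalPotential ζ ρ k₁) =
      fun x => -(ζ + 2) * sin x + k₁ * (2 / ρ * (x * cos x) + 2 * ρ * (1 + 2 / ζ) * x) :=
  funext fun x => (hasDerivAt_horizontalPotential ζ ρ k₁ x).deriv

theorem hasDerivAt_deriv_horizontalPotential (x : ℝ) :
    HasDerivAt (deriv (horizontalPotential ζ ρ k₁))
      (-(ζ + 2) * cos x + k₁ * (2 / ρ * (cos x - x * sin x) + 2 * ρ * (1 + 2 / ζ))) x := by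
  rw [deriv_horizontalPotential]
  refine (((hasDerivAt_sin x).const_mul (-(ζ + 2))).add
    ((((hasDerivAt_id' x).mul (hasDerivAt_cos x)).const_mul (2 / ρ)).add
      ((hasDerivAt_id' x).const_mul (2 * ρ * (1 + 2 / ζ))) |>.const_mul k₁)).congr_deriv ?_
  ring

theorem deriv_deriv_horizontalPotential_zero :
    deriv (deriv (horizontalPotential ζ ρ k₁)) 0 =
      -(ζ + 2) + k₁ * (2 / ρ + 2 * ρ * (1 + 2 / ζ)) := by
  simp [(hasDerivAt_deriv_horizontalPotential ζ ρ k₁ 0).deriv]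

end

theorem deriv_deriv_horizontalPotential_zero_pos {ζ ρ k₁ : ℝ} (hζ : 0 < ζ) (hρ : 0 < ρ)
    (hcond : 2 * k₁ * ρ ^ 2 * (ζ + 2) + 2 * k₁ * ζ - ζ * ρ * (ζ + 2) > 0) :
    0 < deriv (deriv (horizontalPotential ζ ρ k₁)) 0 := by
  have hmul : (-(ζ + 2) + k₁ * (2 / ρ + 2 * ρ * (1 + 2 / ζ))) * (ρ * ζ) =
      2 * k₁ * ρ ^ 2 * (ζ + 2) + 2 * k₁ * ζ - ζ * ρ * (ζ + 2) := by
    field_simp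
    ring
  rw [deriv_deriv_horizontalPotential_zero]
  exact pos_of_mul_pos_left (hmul ▸ hcond) (mul_pos hρ hζ).le

theorem wip_horizontal_potential_strict_local_min_general (ζ ρ k₁ : ℝ)
    (hζ : 0 < ζ) (hρ : 0 < ρ)
    (hcond : 2 * k₁ * ρ ^ 2 * (ζ + 2) + 2 * k₁ * ζ - ζ * ρ * (ζ + 2) > 0) :
    deriv (fun α : ℝ =>
        (ζ + 2) * Real.cos α
          + k₁ * (2 / ρ * (α * Real.sin α + Real.cos α)
              + α ^ 2 * ρ * (1 + 2 / ζ))) 0 = 0 ∧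
    0 < deriv (deriv (fun α : ℝ =>
        (ζ + 2) * Real.cos α
          + k₁ * (2 / ρ * (α * Real.sin α + Real.cos α)
              + α ^ 2 * ρ * (1 + 2 / ζ)))) 0 ∧
    ∃ δ > 0, ∀ α : ℝ, α ≠ 0 → |α| < δ →
      (ζ + 2) * Real.cos 0
          + k₁ * (2 / ρ * ((0 : ℝ) * Real.sin 0 + Real.cos 0)
              + (0 : ℝ) ^ 2 * ρ * (1 + 2 / ζ)) <
      (ζ + 2) * Real.cos α
          + k₁ * (2 / ρ * (α * Real.sin α + Real.cos α)
              + α ^ 2 * ρ * (1 + 2 / ζ)) := by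
  have hd : deriv (horizontalPotential ζ ρ k₁) 0 = 0 := by simp [deriv_horizontalPotential]
  have hdd := deriv_deriv_horizontalPotential_zero_pos hζ hρ hcond
  have hmin := eventually_nhdsNE_lt_of_deriv_deriv_pos hdd hd
    (hasDerivAt_horizontalPotential ζ ρ k₁ 0).continuousAt
  obtain ⟨δ, hδ, hlt⟩ := Metric.eventually_nhds_iff.mp (eventually_nhdsWithin_iff.mp hmin)
  refine ⟨hd, hdd, δ, hδ, fun α hα hαδ => hlt ?_ hα⟩
  rwa [Real.dist_0_eq_abs]

/-- Under condition (13), `α = 0` is a strict local minimum of the potential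
part of the Lyapunov function. -/
theorem wip_horizontal_potential_strict_local_min (ζ ρ k₁ : ℝ)
    (hζ : 0 < ζ) (hρ : 0 < ρ) (hk₁ : 0 < k₁)
    (hcond : 2 * k₁ * ρ ^ 2 * (ζ + 2) + 2 * k₁ * ζ - ζ * ρ * (ζ + 2) > 0) :
    deriv (fun α : ℝ =>
        (ζ + 2) * Real.cos α
          + k₁ * (2 / ρ * (α * Real.sin α + Real.cos α)
              + α ^ 2 * ρ * (1 + 2 / ζ))) 0 = 0 ∧
    0 < deriv (deriv (fun α : ℝ =>
        (ζ + 2) * Real.cos α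
          + k₁ * (2 / ρ * (α * Real.sin α + Real.cos α)
              + α ^ 2 * ρ * (1 + 2 / ζ)))) 0 ∧
    ∃ δ > 0, ∀ α : ℝ, α ≠ 0 → |α| < δ →
      (ζ + 2) * Real.cos 0
          + k₁ * (2 / ρ * ((0 : ℝ) * Real.sin 0 + Real.cos 0)
              + (0 : ℝ) ^ 2 * ρ * (1 + 2 / ζ)) <
      (ζ + 2) * Real.cos α
          + k₁ * (2 / ρ * (α * Real.sin α + Real.cos α)
              + α ^ 2 * ρ * (1 + 2 / ζ)) :=
  wip_horizontal_potential_strict_local_min_general ζ ρ k₁ hζ hρ hcond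
end
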